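/- Let w = γ w_old + (1-γ) w_next be a feasible pooled design with c_m in the range of M_m(w) for all m, and let G_1,...,G_M be symmetric generalized inverses of M_1(w),...,M_M(w) with c_mᵀ G_m c_m > 0 and c_mᵀ G_m M_m(w_next) G_m c_m > 0 for all m. Then for every feasible pooled design w' = γ w_old + (1-γ) v (v ∈ S^k) with c_m in the range of M_m(w') for all m, one has Ψ(w') ≥ Ψ(w) / max_{d ∈ {d_1,...,d_k}} h(d, w). -/
import Mathlib


open Matrix

/-- The information matrix `M(w) = ∑ i, w i • g(d i) g(d i)ᵀ` of a design `w`. -/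
noncomputable def infoMat {k pm : ℕ} (d : Fin k → ℝ) (g : ℝ → Fin pm → ℝ)
    (w : Fin k → ℝ) : Matrix (Fin pm) (Fin pm) ℝ :=
  ∑ i, w i • vecMulVec (g (d i)) (g (d i))

/-- The probability simplex of designs on `k` dose levels. -/
def simplex (k : ℕ) : Set (Fin k → ℝ) := {w | (∀ i, 0 ≤ w i) ∧ ∑ i, w i = 1}

/-- The compound design criterion `Ψ = ∏ m, (c_mᵀ G_m c_m)^(α_m)`, expressed via
generalized inverses `G_m` of the information matrices (on which the value does
not depend when `c_m` lies in the corresponding range). -/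
noncomputable def Psi {M : ℕ} {p : Fin M → ℕ} (α : Fin M → ℝ)
    (c : ∀ m, Fin (p m) → ℝ)
    (G : ∀ m, Matrix (Fin (p m)) (Fin (p m)) ℝ) : ℝ :=
  ∏ m, (c m ⬝ᵥ (G m *ᵥ c m)) ^ (α m)

/-- The function `h(d, w)` from the equivalence theorem, depending on
generalized inverses `G_m` of the information matrices at the pooled design. -/
noncomputable def hFun {k M : ℕ} {p : Fin M → ℕ} (d : Fin k → ℝ)
    (g : ∀ m, ℝ → Fin (p m) → ℝ) (c : ∀ m, Fin (p m) → ℝ) (α : Fin M → ℝ)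
    (wnext : Fin k → ℝ)
    (G : ∀ m, Matrix (Fin (p m)) (Fin (p m)) ℝ) (x : ℝ) : ℝ :=
  (∑ m, α m * (g m x ⬝ᵥ (G m *ᵥ c m)) ^ 2 / (c m ⬝ᵥ (G m *ᵥ c m))) /
    (∑ m, α m * (c m ⬝ᵥ ((G m)ᵀ *ᵥ (infoMat d (g m) wnext *ᵥ (G m *ᵥ c m)))) /
      (c m ⬝ᵥ (G m *ᵥ c m)))

lemma sum_mulVec' {k pm : ℕ} (A : Fin k → Matrix (Fin pm) (Fin pm) ℝ) (x : Fin pm → ℝ) :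
    (∑ i, A i) *ᵥ x = ∑ i, A i *ᵥ x := by
  ext j
  simp only [mulVec, dotProduct, Finset.sum_apply, Matrix.sum_apply, Finset.sum_mul]
  exact Finset.sum_comm

lemma dotProduct_sum' {k pm : ℕ} (y : Fin pm → ℝ) (f : Fin k → Fin pm → ℝ) :
    y ⬝ᵥ (∑ i, f i) = ∑ i, y ⬝ᵥ f i := by
  simp only [dotProduct, Finset.sum_apply, Finset.mul_sum]
  exact Finset.sum_comm

lemma vecMulVec_mulVec' {pm : ℕ} (u v x : Fin pm → ℝ) :
    vecMulVec u v *ᵥ x = (v ⬝ᵥ x) • u := by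
  ext j
  simp [vecMulVec_apply, mulVec, dotProduct, Finset.sum_mul, Finset.mul_sum]
  exact Finset.sum_congr rfl fun l _ => by ring

lemma quadForm {k pm : ℕ} (d : Fin k → ℝ) (g : ℝ → Fin pm → ℝ)
    (w : Fin k → ℝ) (x y : Fin pm → ℝ) :
    y ⬝ᵥ (infoMat d g w *ᵥ x) = ∑ i, w i * ((g (d i)) ⬝ᵥ y) * ((g (d i)) ⬝ᵥ x) := by
  unfold infoMat
  rw [sum_mulVec', dotProduct_sum']
  refine Finset.sum_congr rfl fun i _ => ?_
  rw [Matrix.smul_mulVec, vecMulVec_mulVec']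
  simp [dotProduct_smul, smul_eq_mul, dotProduct_comm]
  ring

lemma infoMat_symm {k pm : ℕ} (d : Fin k → ℝ) (g : ℝ → Fin pm → ℝ) (w : Fin k → ℝ) :
    (infoMat d g w)ᵀ = infoMat d g w := by
  unfold infoMat
  rw [Matrix.transpose_sum]
  refine Finset.sum_congr rfl fun i _ => ?_
  rw [Matrix.transpose_smul]
  congr 1
  ext a b
  simp [vecMulVec_apply, mul_comm]

/-- For a symmetric matrix `Gm`, `cᵀ G y = (G c)ᵀ y`. -/
lemma dot_symm {pm : ℕ} (Gm : Matrix (Fin pm) (Fin pm) ℝ) (hs : Gmᵀ = Gm)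
    (cm y : Fin pm → ℝ) : cm ⬝ᵥ (Gm *ᵥ y) = (Gm *ᵥ cm) ⬝ᵥ y := by
  rw [dotProduct_mulVec, ← Matrix.mulVec_transpose, hs]

/-- `(A x) ⬝ y = x ⬝ (Aᵀ y)`. -/
lemma mulVec_dot {pm : ℕ} (A : Matrix (Fin pm) (Fin pm) ℝ) (x y : Fin pm → ℝ) :
    (A *ᵥ x) ⬝ᵥ y = x ⬝ᵥ (Aᵀ *ᵥ y) := by
  rw [dotProduct_comm, dotProduct_mulVec, ← Matrix.mulVec_transpose, dotProduct_comm]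

/-- Weighted Cauchy–Schwarz. -/
lemma weighted_cs {k : ℕ} (w a b : Fin k → ℝ) (hw : ∀ i, 0 ≤ w i) :
    (∑ i, w i * a i * b i) ^ 2 ≤ (∑ i, w i * a i ^ 2) * ∑ i, w i * b i ^ 2 := by
  have h := Finset.sum_mul_sq_le_sq_mul_sq Finset.univ
    (fun i => Real.sqrt (w i) * a i) (fun i => Real.sqrt (w i) * b i)
  calc (∑ i, w i * a i * b i) ^ 2
      = (∑ i, (Real.sqrt (w i) * a i) * (Real.sqrt (w i) * b i)) ^ 2 := by
        congr 1
        refine Finset.sum_congr rfl fun i _ => ?_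
        have h2 : Real.sqrt (w i) * Real.sqrt (w i) = w i := Real.mul_self_sqrt (hw i)
        calc w i * a i * b i = (Real.sqrt (w i) * Real.sqrt (w i)) * a i * b i := by rw [h2]
          _ = Real.sqrt (w i) * a i * (Real.sqrt (w i) * b i) := by ring
    _ ≤ (∑ i, (Real.sqrt (w i) * a i) ^ 2) * ∑ i, (Real.sqrt (w i) * b i) ^ 2 := h
    _ = (∑ i, w i * a i ^ 2) * ∑ i, w i * b i ^ 2 := by
        congr 1 <;> refine Finset.sum_congr rfl fun i _ => ?_ <;>
          rw [mul_pow, Real.sq_sqrt (hw i)]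

/-- Efficiency lower bound `1/h*(w)`: for the pooled design
`w = γ w_old + (1-γ) w_next` with symmetric generalized inverses `G_m`, every
competing feasible pooled design `w' = γ w_old + (1-γ) v` satisfies
`Ψ(w') ≥ Ψ(w) / max_{d ∈ {d_1,…,d_k}} h(d, w)`. -/
theorem efficiency_bound_hstar {k M : ℕ} (hk : 0 < k) {p : Fin M → ℕ}
    (d : Fin k → ℝ) (g : ∀ m, ℝ → Fin (p m) → ℝ) (c : ∀ m, Fin (p m) → ℝ)
    (α : Fin M → ℝ) (hα : ∀ m, 0 ≤ α m) (hαs : ∑ m, α m = 1)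
    (wold wnext : Fin k → ℝ) (hwold : wold ∈ simplex k) (hwnext : wnext ∈ simplex k)
    (γ : ℝ) (hγ : γ ∈ Set.Ioo (0 : ℝ) 1)
    (w : Fin k → ℝ) (hw : w = fun i => γ * wold i + (1 - γ) * wnext i)
    (hrange : ∀ m, ∃ x, infoMat d (g m) w *ᵥ x = c m)
    (G : ∀ m, Matrix (Fin (p m)) (Fin (p m)) ℝ)
    (hGsym : ∀ m, (G m)ᵀ = G m)
    (hGinv : ∀ m, infoMat d (g m) w * G m * infoMat d (g m) w = infoMat d (g m) w)
    (hpos : ∀ m, 0 < c m ⬝ᵥ (G m *ᵥ c m))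
    (hpos' : ∀ m,
      0 < c m ⬝ᵥ (G m *ᵥ (infoMat d (g m) wnext *ᵥ (G m *ᵥ c m)))) :
    ∀ v ∈ simplex k,
      (∀ m, ∃ x,
        infoMat d (g m) (fun i => γ * wold i + (1 - γ) * v i) *ᵥ x = c m) →
      ∀ G' : ∀ m, Matrix (Fin (p m)) (Fin (p m)) ℝ,
        (∀ m, infoMat d (g m) (fun i => γ * wold i + (1 - γ) * v i) * G' m *
            infoMat d (g m) (fun i => γ * wold i + (1 - γ) * v i) =
            infoMat d (g m) (fun i => γ * wold i + (1 - γ) * v i)) →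
        Psi α c G' ≥ Psi α c G /
          Finset.univ.sup' (Finset.univ_nonempty_iff.mpr ⟨⟨0, hk⟩⟩)
            (fun i => hFun d g c α wnext G (d i)) := by
  obtain ⟨hγ0, hγ1⟩ := hγ
  obtain ⟨holdnn, holds⟩ := hwold
  obtain ⟨hnxnn, hnxs⟩ := hwnext
  intro v hv hrange' G' hGinv'
  obtain ⟨hvnn, hvs⟩ := hv
  set wv : Fin k → ℝ := fun i => γ * wold i + (1 - γ) * v i with hwv
  have hw' : ∀ i, w i = γ * wold i + (1 - γ) * wnext i := fun i => by rw [hw]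
  have hwvnn : ∀ i, 0 ≤ wv i := fun i => by
    have h1 := holdnn i; have h2 := hvnn i
    simp only [hwv]; nlinarith
  -- abbreviations
  set q : ∀ m, Fin (p m) → ℝ := fun m => G m *ᵥ c m with hq
  set β : Fin M → ℝ := fun m => c m ⬝ᵥ (G m *ᵥ c m) with hβdef
  have hβpos : ∀ m, 0 < β m := by simp only [hβdef]; exact hpos
  set N : Fin k → ℝ := fun i => ∑ m, α m * (g m (d i) ⬝ᵥ q m) ^ 2 / β m with hNdef
  have hNnn : ∀ i, 0 ≤ N i := fun i => by
    simp only [hNdef]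
    exact Finset.sum_nonneg fun m _ =>
      div_nonneg (mul_nonneg (hα m) (sq_nonneg _)) (hβpos m).le
  set t : Fin M → ℝ := fun m => q m ⬝ᵥ (infoMat d (g m) wv *ᵥ q m) with htdef
  set V' : Fin M → ℝ := fun m => c m ⬝ᵥ (G' m *ᵥ c m) with hV'def
  -- Claim A: mixed quadratic forms as weighted sums of N
  have claimA : ∀ u : Fin k → ℝ,
      (∑ m, α m * (q m ⬝ᵥ (infoMat d (g m) u *ᵥ q m)) / β m) = ∑ i, u i * N i := by
    intro u
    calc ∑ m, α m * (q m ⬝ᵥ (infoMat d (g m) u *ᵥ q m)) / β m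
        = ∑ m, ∑ i, u i * (α m * (g m (d i) ⬝ᵥ q m) ^ 2 / β m) := by
          refine Finset.sum_congr rfl fun m _ => ?_
          rw [quadForm, Finset.mul_sum, Finset.sum_div]
          refine Finset.sum_congr rfl fun i _ => ?_
          rw [sq]; ring
      _ = ∑ i, ∑ m, u i * (α m * (g m (d i) ⬝ᵥ q m) ^ 2 / β m) := Finset.sum_comm
      _ = ∑ i, u i * N i := by
          refine Finset.sum_congr rfl fun i _ => ?_
          simp only [hNdef]
          rw [Finset.mul_sum]
  -- M(w) q = c
  have hMq : ∀ m, infoMat d (g m) w *ᵥ q m = c m := by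
    intro m
    obtain ⟨x, hx⟩ := hrange m
    simp only [hq]
    calc infoMat d (g m) w *ᵥ (G m *ᵥ c m)
        = infoMat d (g m) w *ᵥ (G m *ᵥ (infoMat d (g m) w *ᵥ x)) := by rw [hx]
      _ = (infoMat d (g m) w * G m * infoMat d (g m) w) *ᵥ x := by
          rw [Matrix.mulVec_mulVec, Matrix.mulVec_mulVec]
      _ = infoMat d (g m) w *ᵥ x := by rw [hGinv m]
      _ = c m := hx
  have hβq : ∀ m, q m ⬝ᵥ (infoMat d (g m) w *ᵥ q m) = β m := by
    intro m
    rw [hMq m]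
    simp only [hq, hβdef]
    exact (dot_symm (G m) (hGsym m) (c m) (c m)).symm
  -- ∑ w N = 1
  have hSw : ∑ i, w i * N i = 1 := by
    rw [← claimA w, ← hαs]
    refine Finset.sum_congr rfl fun m _ => ?_
    rw [hβq m, mul_div_assoc, div_self (hβpos m).ne', mul_one]
  -- the denominator D of hFun
  set D : ℝ := ∑ m, α m * (c m ⬝ᵥ ((G m)ᵀ *ᵥ (infoMat d (g m) wnext *ᵥ q m))) / β m
    with hDdef
  have hDalt : ∀ m, c m ⬝ᵥ ((G m)ᵀ *ᵥ (infoMat d (g m) wnext *ᵥ q m))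
      = q m ⬝ᵥ (infoMat d (g m) wnext *ᵥ q m) := fun m => by
    rw [hGsym m]
    simp only [hq]
    exact dot_symm (G m) (hGsym m) (c m) _
  have hD : D = ∑ i, wnext i * N i := by
    rw [hDdef, ← claimA wnext]
    exact Finset.sum_congr rfl fun m _ => by rw [hDalt m]
  have hexα : ∃ m0, 0 < α m0 := by
    by_contra h
    push_neg at h
    have h0 : ∑ m, α m = 0 :=
      Finset.sum_eq_zero fun m _ => le_antisymm (h m) (hα m)
    rw [hαs] at h0
    norm_num at h0
  have hDpos : 0 < D := by
    obtain ⟨m0, hm0⟩ := hexα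
    rw [hDdef]
    refine Finset.sum_pos' (fun m _ => ?_) ⟨m0, Finset.mem_univ m0, ?_⟩
    · refine div_nonneg (mul_nonneg (hα m) ?_) (hβpos m).le
      rw [hDalt m, quadForm]
      exact Finset.sum_nonneg fun i _ => by
        nlinarith [mul_nonneg (hnxnn i) (sq_nonneg (g m (d i) ⬝ᵥ q m))]
    · have hX : 0 < c m0 ⬝ᵥ ((G m0)ᵀ *ᵥ (infoMat d (g m0) wnext *ᵥ q m0)) := by
        rw [hGsym m0]; simp only [hq]; exact hpos' m0
      exact div_pos (mul_pos hm0 hX) (hβpos m0)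
  -- choose range witnesses for the competing design
  choose x' hx' using hrange'
  -- V' m = x' ⬝ c
  have hV'eq : ∀ m, V' m = x' m ⬝ᵥ c m := by
    intro m
    simp only [hV'def]
    calc c m ⬝ᵥ (G' m *ᵥ c m)
        = (infoMat d (g m) wv *ᵥ x' m) ⬝ᵥ
            (G' m *ᵥ (infoMat d (g m) wv *ᵥ x' m)) := by rw [hx' m]
      _ = x' m ⬝ᵥ ((infoMat d (g m) wv)ᵀ *ᵥ
            (G' m *ᵥ (infoMat d (g m) wv *ᵥ x' m))) := mulVec_dot _ _ _
      _ = x' m ⬝ᵥ ((infoMat d (g m) wv * G' m * infoMat d (g m) wv)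
            *ᵥ x' m) := by
          rw [infoMat_symm, Matrix.mulVec_mulVec, Matrix.mulVec_mulVec]
      _ = x' m ⬝ᵥ (infoMat d (g m) wv *ᵥ x' m) := by
          rw [hGinv' m]
      _ = x' m ⬝ᵥ c m := by rw [hx' m]
  -- sum expressions
  have htsum : ∀ m, t m = ∑ i, wv i * (g m (d i) ⬝ᵥ q m) ^ 2 := by
    intro m
    simp only [htdef]
    rw [quadForm]
    exact Finset.sum_congr rfl fun i _ => by rw [sq]; ring
  have hV'sum : ∀ m, V' m = ∑ i, wv i * (g m (d i) ⬝ᵥ x' m) ^ 2 := by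
    intro m
    rw [hV'eq m, ← hx' m, quadForm]
    exact Finset.sum_congr rfl fun i _ => by rw [sq]; ring
  have hβsum : ∀ m, β m
      = ∑ i, wv i * (g m (d i) ⬝ᵥ q m) * (g m (d i) ⬝ᵥ x' m) := by
    intro m
    have h1 : β m = q m ⬝ᵥ c m := by
      simp only [hβdef, hq]
      exact dot_symm (G m) (hGsym m) (c m) (c m)
    rw [h1, ← hx' m, quadForm]
  have htnn : ∀ m, 0 ≤ t m := fun m => by
    rw [htsum m]
    exact Finset.sum_nonneg fun i _ => mul_nonneg (hwvnn i) (sq_nonneg _)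
  -- Cauchy–Schwarz
  have hCS : ∀ m, β m ^ 2 ≤ t m * V' m := by
    intro m
    rw [hβsum m, htsum m, hV'sum m]
    exact weighted_cs wv _ _ hwvnn
  have htpos : ∀ m, 0 < t m := by
    intro m
    rcases (htnn m).lt_or_eq with h | h
    · exact h
    · exfalso
      have h1 := hCS m
      rw [← h, zero_mul] at h1
      nlinarith [hβpos m]
  have hV'pos : ∀ m, 0 < V' m := by
    intro m
    nlinarith [hCS m, hβpos m, htpos m]
  -- product of lower bounds
  have hPsiG'_ge : ∏ m, (β m ^ 2 / t m) ^ (α m) ≤ Psi α c G' := by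
    unfold Psi
    refine Finset.prod_le_prod (fun m _ => Real.rpow_nonneg (div_nonneg (sq_nonneg _) (htnn m)) _)
      (fun m _ => ?_)
    have hle : β m ^ 2 / t m ≤ c m ⬝ᵥ (G' m *ᵥ c m) := by
      rw [div_le_iff₀ (htpos m)]
      have h1 := hCS m
      have h2 : c m ⬝ᵥ (G' m *ᵥ c m) = V' m := by simp only [hV'def]
      rw [h2]; nlinarith
    exact Real.rpow_le_rpow (div_nonneg (sq_nonneg _) (htnn m)) hle (hα m)
  have hPsiG : Psi α c G = ∏ m, β m ^ (α m) := by
    simp only [Psi, hβdef]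
  have hΨGpos : 0 < Psi α c G := by
    rw [hPsiG]
    exact Finset.prod_pos fun m _ => Real.rpow_pos_of_pos (hβpos m) _
  set P : ℝ := ∏ m, (t m / β m) ^ (α m) with hPdef
  set S : ℝ := ∑ m, α m * (t m / β m) with hSdef
  have hPpos : 0 < P := by
    rw [hPdef]
    exact Finset.prod_pos fun m _ =>
      Real.rpow_pos_of_pos (div_pos (htpos m) (hβpos m)) _
  have hPS : P ≤ S := by
    rw [hPdef, hSdef]
    exact Real.geom_mean_le_arith_mean_weighted Finset.univ α (fun m => t m / β m)
      (fun m _ => hα m) hαs (fun m _ => (div_pos (htpos m) (hβpos m)).le)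
  have hSpos : 0 < S := hPpos.trans_le hPS
  have eq1 : ∏ m, (β m ^ 2 / t m) ^ (α m) = Psi α c G * P⁻¹ := by
    calc ∏ m, (β m ^ 2 / t m) ^ (α m)
        = ∏ m, (β m ^ (α m) * ((t m / β m) ^ (α m))⁻¹) := by
          refine Finset.prod_congr rfl fun m _ => ?_
          rw [← Real.inv_rpow (div_nonneg (htnn m) (hβpos m).le), inv_div,
            ← Real.mul_rpow (hβpos m).le (div_nonneg (hβpos m).le (htnn m))]
          congr 1
          rw [sq, mul_div_assoc]
      _ = (∏ m, β m ^ (α m)) * ∏ m, ((t m / β m) ^ (α m))⁻¹ :=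
          Finset.prod_mul_distrib
      _ = Psi α c G * P⁻¹ := by
          rw [← hPsiG, Finset.prod_inv_distrib, hPdef]
  -- S as a weighted sum of N
  have hSeq : S = ∑ i, wv i * N i := by
    rw [hSdef, ← claimA wv]
    refine Finset.sum_congr rfl fun m _ => ?_
    simp only [htdef]
    ring
  -- the maximum of N
  have hne : (Finset.univ : Finset (Fin k)).Nonempty :=
    Finset.univ_nonempty_iff.mpr ⟨⟨0, hk⟩⟩
  set Nmax : ℝ := Finset.univ.sup' hne N with hNmaxdef
  have hleN : ∀ i, N i ≤ Nmax := fun i => Finset.le_sup' N (Finset.mem_univ i)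
  have hsum_le : ∀ u : Fin k → ℝ, (∀ i, 0 ≤ u i) → (∑ i, u i = 1) →
      ∑ i, u i * N i ≤ Nmax := by
    intro u hun hus
    calc ∑ i, u i * N i ≤ ∑ i, u i * Nmax :=
          Finset.sum_le_sum fun i _ => mul_le_mul_of_nonneg_left (hleN i) (hun i)
      _ = Nmax := by rw [← Finset.sum_mul, hus, one_mul]
  have hDleN : D ≤ Nmax := by rw [hD]; exact hsum_le wnext hnxnn hnxs
  have hSvleN : ∑ i, v i * N i ≤ Nmax := hsum_le v hvnn hvs
  have hAoldnn : 0 ≤ ∑ i, wold i * N i :=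
    Finset.sum_nonneg fun i _ => mul_nonneg (holdnn i) (hNnn i)
  have hone : γ * (∑ i, wold i * N i) + (1 - γ) * (∑ i, wnext i * N i) = 1 := by
    have hcomb : γ * (∑ i, wold i * N i) + (1 - γ) * (∑ i, wnext i * N i)
        = ∑ i, w i * N i := by
      rw [Finset.mul_sum, Finset.mul_sum, ← Finset.sum_add_distrib]
      exact Finset.sum_congr rfl fun i _ => by rw [hw' i]; ring
    rw [hcomb, hSw]
  have hSsplit : S = γ * (∑ i, wold i * N i) + (1 - γ) * (∑ i, v i * N i) := by
    rw [hSeq, Finset.mul_sum, Finset.mul_sum, ← Finset.sum_add_distrib]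
    exact Finset.sum_congr rfl fun i _ => by simp only [hwv]; ring
  -- S ≤ Nmax / D
  have hSle : S ≤ Nmax / D := by
    rw [le_div_iff₀ hDpos, hSsplit]
    have honeD : γ * (∑ i, wold i * N i) + (1 - γ) * D = 1 := by
      rw [hD]; exact hone
    have honeDN : (γ * (∑ i, wold i * N i) + (1 - γ) * D) * Nmax = Nmax := by
      rw [honeD, one_mul]
    nlinarith [mul_nonneg (mul_nonneg hγ0.le hAoldnn) (sub_nonneg.2 hDleN),
      mul_nonneg (mul_nonneg (by linarith : (0:ℝ) ≤ 1 - γ) hDpos.le)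
        (sub_nonneg.2 hSvleN), honeDN]
  -- identify the sup' in the goal
  have hHfun : ∀ i, hFun d g c α wnext G (d i) = N i / D := fun i => by
    simp only [hFun, hNdef, hDdef, hβdef, hq]
  have hHeq : Finset.univ.sup' (Finset.univ_nonempty_iff.mpr ⟨⟨0, hk⟩⟩)
      (fun i => hFun d g c α wnext G (d i)) = Nmax / D := by
    refine le_antisymm ?_ ?_
    · refine Finset.sup'_le _ _ fun i _ => ?_
      rw [hHfun i]
      gcongr
      exact hleN i
    · obtain ⟨i0, _, hi0⟩ := Finset.exists_mem_eq_sup' hne N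
      rw [hNmaxdef, hi0, ← hHfun i0]
      exact Finset.le_sup' (fun i => hFun d g c α wnext G (d i)) (Finset.mem_univ i0)
  -- final chain
  rw [ge_iff_le, hHeq]
  calc Psi α c G / (Nmax / D)
      ≤ Psi α c G / S :=
        div_le_div_of_nonneg_left hΨGpos.le hSpos hSle
      _ = Psi α c G * S⁻¹ := div_eq_mul_inv _ _
      _ ≤ Psi α c G * P⁻¹ := by
        have hinv : S⁻¹ ≤ P⁻¹ := inv_anti₀ hPpos hPS
        exact mul_le_mul_of_nonneg_left hinv hΨGpos.le
      _ = ∏ m, (β m ^ 2 / t m) ^ (α m) := eq1.symm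
      _ ≤ Psi α c G' := hPsiG'_ge
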